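/- Let s, t > 1 be integers with s even, t odd, and define Q(b) = -((s+t-1)/2)b² + (2(t-1)n - s + t - 1)b - 2(r+t)n² - 2(r-u+t-2)n for fixed integers r, u and positive integer n. Write N = n+1 and let b₀ = (2(t-1)/(s+t-1))N - (2(t-1)/(s+t-1))j + v_j - 1 where j = N mod (s+t-1)/2 and v_j is the odd integer nearest to 2(t-1)j/(s+t-1). Then Q(b₀) = (2(t-1)²/(s+t-1) - 2(r+t))N² + 2(r+u+3)N + c_j, where c_j = -((s+t-1)/2)β_j² - (s+t-1)β_j - 2(u+2) and β_j = v_j - 1 - 2(t-1)j/(s+t-1). -/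
import Mathlib


/-- The quadratic `Q(b)` over `ℚ` from the proof of Theorem 2.4. -/
def Qq (r u s t n : ℤ) (b : ℚ) : ℚ :=
  -(((s : ℚ) + t - 1) / 2) * b ^ 2
    + (2 * ((t : ℚ) - 1) * n - s + t - 1) * b
    - 2 * ((r : ℚ) + t) * (n : ℚ) ^ 2 - 2 * ((r : ℚ) - u + t - 2) * n

/-- Central identity of Theorem 2.4(1): evaluating `Q` at the even integer
`b₀ = (2(t-1)/(s+t-1))N - (2(t-1)/(s+t-1))j + v_j - 1` near the vertex gives
`Q(b₀) = (2(t-1)²/(s+t-1) - 2(r+t))N² + 2(r+u+3)N + c_j` with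
`c_j = -((s+t-1)/2)β_j² - (s+t-1)β_j - 2(u+2)` and
`β_j = v_j - 1 - 2(t-1)j/(s+t-1)`. -/
theorem stmt5 (r u s t n N p j m v : ℤ) (hs : 1 < s) (ht : 1 < t)
    (hse : Even s) (hto : Odd t) (hn : 1 ≤ n)
    (hm : 2 * m = s + t - 1) (hNdef : N = n + 1)
    (hj : j = N % m) (hp : p = N / m)
    (hv : Odd v)
    (hnear : ∀ w : ℤ, Odd w →
      |(v : ℚ) - 2 * ((t : ℚ) - 1) * j / ((s : ℚ) + t - 1)|
        ≤ |(w : ℚ) - 2 * ((t : ℚ) - 1) * j / ((s : ℚ) + t - 1)|)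
    (b₀ β c_j : ℚ)
    (hβ : β = (v : ℚ) - 1 - 2 * ((t : ℚ) - 1) * j / ((s : ℚ) + t - 1))
    (hb₀ : b₀ = (2 * ((t : ℚ) - 1) / ((s : ℚ) + t - 1)) * N
        - (2 * ((t : ℚ) - 1) / ((s : ℚ) + t - 1)) * j + v - 1)
    (hc : c_j = -(((s : ℚ) + t - 1) / 2) * β ^ 2 - ((s : ℚ) + t - 1) * β
        - 2 * ((u : ℚ) + 2)) :
    Qq r u s t n b₀
      = (2 * ((t : ℚ) - 1) ^ 2 / ((s : ℚ) + t - 1) - 2 * ((r : ℚ) + t)) * (N : ℚ) ^ 2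
        + 2 * ((r : ℚ) + u + 3) * N + c_j := by
  have hS : ((s : ℚ) + t - 1) ≠ 0 := by
    have : (1:ℚ) < s := by exact_mod_cast hs
    have : (1:ℚ) < t := by exact_mod_cast ht
    linarith
  have hN : (N : ℚ) = (n : ℚ) + 1 := by exact_mod_cast congrArg Int.cast hNdef
  subst hβ hb₀ hc
  rw [Qq, hN]
  field_simp
  ring
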